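/- Let V be a finite-dimensional real vector space equipped with a nondegenerate symmetric bilinear form of Lorentz signature (an orthogonal basis has exactly one vector of negative norm-square, all others of positive norm-square). Let 𝔨 be a Lie subalgebra of End(V) (under the commutator bracket) all of whose elements are nilpotent endomorphisms that are skew-symmetric with respect to the form. Then 𝔨 is abelian: KL = LK for all K, L ∈ 𝔨. -/

import Mathlib

/-!
Totally isotropic subspaces of a Lorentz space are at most lines. Hence a nonzero nilpotent
skew endomorphism `M` satisfies `M³ = 0` and is a null rotation: `M² = c • p ⊗ B p` for an
isotropic `p ≠ 0`, `M` maps `V` into `p^⊥` and `p^⊥` into `ℝ p`. For `K, L ∈ 𝔨`, polarising the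
cubes of `K ± L` gives `K²L + KLK + LK² = 0`, which together with `tr ([K, L]²) = 0` forces
`tr (K²L²) = 0`. Since `tr (K²L²) = c d B(p, q)²`, the axes of `K` and `L` are orthogonal isotropic
vectors, hence span the same line. Then `[K, L]` maps `V` into that line, and a skew endomorphism
of rank at most one vanishes when the form is nondegenerate.
-/

/-- A symmetric bilinear form is Lorentz: there is an orthogonal basis in which exactly one
basis vector has negative norm-square and all others have positive norm-square. -/
def IsLorentz {V : Type*} [AddCommGroup V] [Module ℝ V] (B : LinearMap.BilinForm ℝ V) : Prop :=
  ∃ (m : ℕ) (b : Module.Basis (Fin (m + 1)) ℝ V) (i₀ : Fin (m + 1)),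
    (∀ i j, i ≠ j → B (b i) (b j) = 0) ∧ B (b i₀) (b i₀) < 0 ∧
    ∀ i, i ≠ i₀ → 0 < B (b i) (b i)

open LinearMap (BilinForm IsSkewAdjoint range)
open Submodule (mem_span_singleton span_singleton_le_iff_mem)

theorem mul_mul_add_mul_mul_add_mul_mul_eq_zero {𝕜 A : Type*} [Field 𝕜] [NeZero (2 : 𝕜)]
    [Ring A] [Module 𝕜 A] {a b : A} (hb : b ^ 3 = 0) (hadd : (a + b) ^ 3 = 0)
    (hsub : (a - b) ^ 3 = 0) : a * a * b + a * b * a + b * a * a = 0 := by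
  have h : (2 : 𝕜) • (a * a * b + a * b * a + b * a * a) = 0 := by
    rw [two_smul]
    calc _ = (a + b) ^ 3 - (a - b) ^ 3 - (2 : ℕ) • b ^ 3 := by noncomm_ring
      _ = 0 := by rw [hb, hadd, hsub]; simp
  exact (smul_eq_zero.1 h).resolve_left two_ne_zero

theorem LinearMap.range_mul_sub_mul_le {R M : Type*} [Ring R] [AddCommGroup M] [Module R M]
    {K L : Module.End R M} {W ℓ : Submodule R M} (hK : range K ≤ W) (hKW : W ≤ ℓ.comap K)
    (hL : range L ≤ W) (hLW : W ≤ ℓ.comap L) : range (K * L - L * K) ≤ ℓ := by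
  rintro _ ⟨x, rfl⟩
  exact sub_mem (hKW (hL ⟨x, rfl⟩)) (hLW (hK ⟨x, rfl⟩))

theorem LinearMap.trace_mul_self_mul_mul_self_eq_zero {𝕜 V : Type*} [Field 𝕜] [CharZero 𝕜]
    [AddCommGroup V] [Module 𝕜 V] [FiniteDimensional 𝕜 V] {a b : Module.End 𝕜 V}
    (h : a * a * b + a * b * a + b * a * a = 0) (hc : IsNilpotent (a * b - b * a)) :
    trace 𝕜 V (a * a * (b * b)) = 0 := by
  have h₁ : trace 𝕜 V (a * a * b * b + a * b * a * b + b * a * a * b) = 0 := by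
    rw [← add_mul, ← add_mul, h, zero_mul, map_zero]
  have h₂ : trace 𝕜 V ((a * b - b * a) * (a * b - b * a)) = 0 :=
    (isNilpotent_trace_of_isNilpotent ((Commute.refl _).isNilpotent_mul_left hc)).eq_zero
  have e₁ : trace 𝕜 V (b * a * a * b) = trace 𝕜 V (a * a * b * b) := by
    simpa only [mul_assoc] using trace_mul_comm 𝕜 b (a * a * b)
  have e₂ : trace 𝕜 V (a * b * b * a) = trace 𝕜 V (a * a * b * b) := by
    simpa only [mul_assoc] using trace_mul_comm 𝕜 (a * b * b) a
  have e₃ : trace 𝕜 V (b * a * b * a) = trace 𝕜 V (a * b * a * b) := by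
    simpa only [mul_assoc] using trace_mul_comm 𝕜 (b * a * b) a
  rw [map_add, map_add, e₁] at h₁
  rw [mul_sub, sub_mul, sub_mul, map_sub, map_sub, map_sub] at h₂
  simp only [← mul_assoc, e₁, e₂, e₃] at h₂
  rw [← mul_assoc]
  linear_combination (2 * h₁ - h₂) / 6

namespace LinearMap.BilinForm

section Field

variable {𝕜 V : Type*} [Field 𝕜] [AddCommGroup V] [Module 𝕜 V] {B : BilinForm 𝕜 V}

/-- Witt index at most one, stated pointwise: orthogonal isotropic vectors are collinear. -/
def HasWittIndexLeOne (B : BilinForm 𝕜 V) : Prop :=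
  ∀ v w : V, B v v = 0 → B w w = 0 → B v w = 0 → v ≠ 0 → w ∈ 𝕜 ∙ v

theorem HasWittIndexLeOne.range_le_span (hW : B.HasWittIndexLeOne) {f : Module.End 𝕜 V}
    (hf : ∀ x y, B (f x) (f y) = 0) {v : V} (hv : f v ≠ 0) : range f ≤ 𝕜 ∙ f v := by
  rintro _ ⟨x, rfl⟩
  exact hW _ _ (hf v v) (hf x x) (hf v x) hv

theorem Nondegenerate.exists_apply_ne_zero (hnd : B.Nondegenerate) {p : V} (hp : p ≠ 0) :
    ∃ y, B p y ≠ 0 := by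
  by_contra! h
  exact hp (hnd.1 p h)

theorem mem_orthogonal_span_singleton_iff {p x : V} : x ∈ B.orthogonal (𝕜 ∙ p) ↔ B p x = 0 := by
  rw [orthogonal_span_singleton_eq_toLin_ker, LinearMap.mem_ker]
  rfl

theorem trace_mul_self_mul_mul_self_eq [FiniteDimensional 𝕜 V] {K L : Module.End 𝕜 V}
    {c d : 𝕜} {p q : V} (hK : ∀ x, K (K x) = (c * B p x) • p)
    (hL : ∀ x, L (L x) = (d * B q x) • q) :
    trace 𝕜 V (K * K * (L * L)) = c * d * B p q * B q p := by
  have h : K * K * (L * L) = (c * d * B p q) • (B q).smulRight p := by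
    ext x
    simp only [Module.End.mul_apply, hL, hK, map_smul, smul_apply, smulRight_apply, smul_smul]
    congr 1
    ring
  rw [h, map_smul, trace_smulRight, smul_eq_mul]

end Field

theorem iIsOrtho.apply_eq_sum {R M ι : Type*} [CommSemiring R] [AddCommMonoid M] [Module R M]
    [Fintype ι] {B : BilinForm R M} {b : Module.Basis ι R M} (hb : B.iIsOrtho b) (v w : M) :
    B v w = ∑ i, b.repr v i * b.repr w i * B (b i) (b i) := by
  conv_lhs => rw [← b.sum_repr v, ← b.sum_repr w]
  simp only [map_sum, map_smul, LinearMap.sum_apply, LinearMap.smul_apply, smul_eq_mul,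
    Finset.mul_sum]
  refine Finset.sum_congr rfl fun i _ => ?_
  rw [Finset.sum_eq_single i (fun j _ hj => by rw [hb hj]; ring) (by simp)]
  ring

theorem iIsOrtho.eq_zero_of_repr_eq_zero {V ι : Type*} [AddCommGroup V] [Module ℝ V] [Fintype ι]
    {B : BilinForm ℝ V} {b : Module.Basis ι ℝ V} (hb : B.iIsOrtho b) {i₀ : ι}
    (hpos : ∀ i, i ≠ i₀ → 0 < B (b i) (b i)) {v : V}
    (hv : b.repr v i₀ = 0) (hvv : B v v = 0) : v = 0 := by
  rw [hb.apply_eq_sum] at hvv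
  have hterm : ∀ i, b.repr v i * b.repr v i * B (b i) (b i) = 0 := by
    refine fun i => (Finset.sum_eq_zero_iff_of_nonneg (fun i _ => ?_)).1 hvv i (Finset.mem_univ i)
    rcases eq_or_ne i i₀ with rfl | hi
    · simp [hv]
    · exact mul_nonneg (mul_self_nonneg _) (hpos i hi).le
  refine b.repr.injective (Finsupp.ext fun i => ?_)
  rcases eq_or_ne i i₀ with rfl | hi
  · simpa using hv
  · simpa [(hpos i hi).ne'] using hterm i

end LinearMap.BilinForm

open LinearMap.BilinForm in
theorem IsLorentz.nondegenerate {V : Type*} [AddCommGroup V] [Module ℝ V]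
    {B : BilinForm ℝ V} (hL : IsLorentz B) : B.Nondegenerate := by
  obtain ⟨m, b, i₀, horth, hneg, hpos⟩ := hL
  refine (iIsOrtho.nondegenerate_iff_not_isOrtho_basis_self B b horth).2 fun i => ?_
  rcases eq_or_ne i i₀ with rfl | hi
  exacts [hneg.ne, (hpos i hi).ne']

open LinearMap.BilinForm in
theorem IsLorentz.hasWittIndexLeOne {V : Type*} [AddCommGroup V] [Module ℝ V]
    {B : BilinForm ℝ V} (hB : B.IsSymm) (hL : IsLorentz B) : B.HasWittIndexLeOne := by
  obtain ⟨m, b, i₀, horth, -, hpos⟩ := hL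
  intro v w hvv hww hvw hv
  have hv₀ : b.repr v i₀ ≠ 0 := fun h => hv (iIsOrtho.eq_zero_of_repr_eq_zero horth hpos h hvv)
  have hz : b.repr v i₀ • w - b.repr w i₀ • v = 0 := by
    refine iIsOrtho.eq_zero_of_repr_eq_zero horth hpos (by simp [mul_comm]) ?_
    simp only [map_sub, map_smul, LinearMap.sub_apply, LinearMap.smul_apply, smul_eq_mul, hvv, hww,
      hvw, hB.eq w v]
    ring
  rw [sub_eq_zero] at hz
  rw [← Submodule.smul_mem_iff _ hv₀, hz]
  exact Submodule.smul_mem _ _ (Submodule.mem_span_singleton_self v)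

namespace LinearMap.IsSkewAdjoint

open LinearMap.BilinForm

variable {𝕜 V : Type*} [Field 𝕜] [AddCommGroup V] [Module 𝕜 V] {B : BilinForm 𝕜 V}
  {M : Module.End 𝕜 V}

theorem apply_left (hM : IsSkewAdjoint B M) (x y : V) : B (M x) y = -B x (M y) := by
  rw [hM x y, Pi.neg_apply, map_neg]

theorem apply_pow_left (hM : IsSkewAdjoint B M) (n : ℕ) (x y : V) :
    B ((M ^ n) x) y = (-1) ^ n * B x ((M ^ n) y) := by
  induction n generalizing x y with
  | zero => simp
  | succ n ih =>
    rw [pow_succ', Module.End.mul_apply, hM.apply_left, ih, ← pow_mul_comm',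
      Module.End.mul_apply]
    ring

theorem apply_apply_left (hM : IsSkewAdjoint B M) (x y : V) : B (M (M x)) y = B x (M (M y)) := by
  simpa [sq] using hM.apply_pow_left 2 x y

theorem eq_zero_of_range_le_span [NeZero (2 : 𝕜)] (hB : B.IsSymm) (hnd : B.Nondegenerate)
    (hM : IsSkewAdjoint B M) {p : V} (hMp : range M ≤ 𝕜 ∙ p) : M = 0 := by
  rcases eq_or_ne p 0 with rfl | hp
  · exact LinearMap.range_eq_bot.1 (by simpa using hMp)
  obtain ⟨y, hy⟩ := hnd.exists_apply_ne_zero hp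
  have key : ∀ x, B (M x) y = 0 → M x = 0 := fun x hx => by
    obtain ⟨t, ht⟩ := mem_span_singleton.1 (hMp ⟨x, rfl⟩)
    rw [← ht, map_smul, smul_apply, smul_eq_mul, mul_eq_zero] at hx
    rw [← ht, hx.resolve_right hy, zero_smul]
  have hMy : M y = 0 := by
    have h : (2 : 𝕜) * B (M y) y = 0 := by linear_combination hM.apply_left y y - hB.eq y (M y)
    exact key y ((mul_eq_zero.1 h).resolve_left two_ne_zero)
  ext x
  exact key x (by rw [hM.apply_left, hMy, map_zero, neg_zero])

theorem pow_eq_zero_of_pow_succ_eq_zero (hW : B.HasWittIndexLeOne) (hM : IsSkewAdjoint B M)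
    {k : ℕ} (h : M ^ (k + 4) = 0) : M ^ (k + 3) = 0 := by
  -- the range of `M ^ (k + 2)` is totally isotropic since `2 * (k + 2) ≥ k + 4`
  have hiso : ∀ x y, B ((M ^ (k + 2)) x) ((M ^ (k + 2)) y) = 0 := fun x y => by
    rw [hM.apply_pow_left, ← Module.End.mul_apply, ← pow_add,
      pow_eq_zero_of_le (by omega) h, zero_apply, map_zero, mul_zero]
  ext w
  by_contra hw
  have hw' : (M ^ (k + 2)) (M w) ≠ 0 := by rwa [← Module.End.mul_apply, ← pow_succ]
  obtain ⟨t, ht⟩ := mem_span_singleton.1 (hW.range_le_span hiso hw' ⟨w, rfl⟩)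
  apply hw
  calc (M ^ (k + 3)) w = M ((M ^ (k + 2)) w) := by rw [pow_succ', Module.End.mul_apply]
    _ = t • (M ^ (k + 4)) w := by
      rw [← ht, map_smul, ← Module.End.mul_apply, ← Module.End.mul_apply, ← pow_succ',
        ← pow_succ]
    _ = 0 := by rw [h, zero_apply, smul_zero]

theorem pow_three_eq_zero (hW : B.HasWittIndexLeOne) (hM : IsSkewAdjoint B M)
    (hnil : IsNilpotent M) : M ^ 3 = 0 := by
  obtain ⟨n, hn⟩ := hnil
  have descend : ∀ k, M ^ (k + 3) = 0 → M ^ 3 = 0 := fun k => by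
    induction k with
    | zero => exact fun h => h
    | succ k ih => exact fun h => ih (hM.pow_eq_zero_of_pow_succ_eq_zero hW h)
  exact descend n (pow_eq_zero_of_le (by omega) hn)

theorem mul_self_ne_zero [NeZero (2 : 𝕜)] (hB : B.IsSymm) (hnd : B.Nondegenerate)
    (hW : B.HasWittIndexLeOne) (hM : IsSkewAdjoint B M) (hM0 : M ≠ 0) : M * M ≠ 0 := by
  intro hMM
  obtain ⟨v, hv⟩ := DFunLike.ne_iff.1 hM0
  have hiso : ∀ x y, B (M x) (M y) = 0 := fun x y => by
    rw [hM.apply_left, ← Module.End.mul_apply, hMM, zero_apply, map_zero, neg_zero]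
  exact hM0 (hM.eq_zero_of_range_le_span hB hnd (hW.range_le_span hiso hv))

theorem exists_apply_apply_eq_smul [NeZero (2 : 𝕜)] (hB : B.IsSymm) (hnd : B.Nondegenerate)
    (hW : B.HasWittIndexLeOne) (hM : IsSkewAdjoint B M) (hM3 : M ^ 3 = 0) (hM0 : M ≠ 0) :
    ∃ (c : 𝕜) (p : V), c ≠ 0 ∧ p ≠ 0 ∧ ∀ x, M (M x) = (c * B p x) • p := by
  have hM4 : M * M * (M * M) = 0 := by rw [← mul_assoc, ← pow_three', hM3, zero_mul]
  have hiso : ∀ x y, B ((M * M) x) ((M * M) y) = 0 := fun x y => by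
    rw [Module.End.mul_apply, hM.apply_apply_left, ← Module.End.mul_apply, ← Module.End.mul_apply,
      hM4, zero_apply, map_zero]
  obtain ⟨x₀, hx₀⟩ := DFunLike.ne_iff.1 (hM.mul_self_ne_zero hB hnd hW hM0)
  have hrange := hW.range_le_span hiso hx₀
  generalize hpx : (M * M) x₀ = p at hx₀ hrange
  obtain ⟨y, hy⟩ := hnd.exists_apply_ne_zero hx₀
  obtain ⟨t, ht⟩ := mem_span_singleton.1 (hrange ⟨y, rfl⟩)
  have hform : ∀ x, M (M x) = (t / B p y * B p x) • p := fun x => by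
    obtain ⟨s, hs⟩ := mem_span_singleton.1 (hrange ⟨x, rfl⟩)
    have h := hM.apply_apply_left x y
    rw [← Module.End.mul_apply M M x, ← Module.End.mul_apply M M y, ← hs, ← ht,
      map_smul, map_smul, smul_apply, hB.eq x p, smul_eq_mul, smul_eq_mul] at h
    rw [← Module.End.mul_apply, ← hs, div_mul_eq_mul_div, ← h, mul_div_cancel_right₀ _ hy]
  refine ⟨t / B p y, p, fun hc => hx₀ ?_, hx₀, hform⟩
  rw [← hpx, Module.End.mul_apply, hform x₀, hc, zero_mul, zero_smul, zero_apply]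

/-- `M` is a null rotation about the isotropic line `𝕜 ∙ p`. -/
theorem exists_null_axis [NeZero (2 : 𝕜)] (hB : B.IsSymm) (hnd : B.Nondegenerate)
    (hW : B.HasWittIndexLeOne) (hM : IsSkewAdjoint B M) (hM3 : M ^ 3 = 0) (hM0 : M ≠ 0) :
    ∃ (c : 𝕜) (p : V), c ≠ 0 ∧ p ≠ 0 ∧ (∀ x, M (M x) = (c * B p x) • p) ∧ B p p = 0 ∧
      range M ≤ B.orthogonal (𝕜 ∙ p) ∧ B.orthogonal (𝕜 ∙ p) ≤ (𝕜 ∙ p).comap M := by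
  obtain ⟨c, p, hc, hp, hform⟩ := hM.exists_apply_apply_eq_smul hB hnd hW hM3 hM0
  obtain ⟨y, hy⟩ := hnd.exists_apply_ne_zero hp
  have hMp : M p = 0 := by
    have h : M (M (M y)) = (c * B p y) • M p := by rw [hform y, map_smul]
    rwa [← Module.End.mul_apply, ← Module.End.mul_apply, ← pow_three', hM3, zero_apply, eq_comm,
      smul_eq_zero, or_iff_right (mul_ne_zero hc hy)] at h
  have hpp : B p p = 0 := by
    have h := hM.apply_apply_left y p
    rw [hform, hMp, map_zero, map_zero, map_smul, smul_apply, smul_eq_mul, mul_eq_zero,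
      or_iff_right (mul_ne_zero hc hy)] at h
    exact h
  have hpM : ∀ x, B p (M x) = 0 := fun x => by
    rw [← neg_eq_zero, ← hM.apply_left, hMp, map_zero, zero_apply]
  refine ⟨c, p, hc, hp, hform, hpp, ?_, fun x hx => ?_⟩
  · rintro _ ⟨x, rfl⟩
    exact mem_orthogonal_span_singleton_iff.2 (hpM x)
  · rw [mem_orthogonal_span_singleton_iff] at hx
    have hMMx : M (M x) = 0 := by rw [hform, hx, mul_zero, zero_smul]
    exact hW p (M x) hpp (by rw [hM.apply_left, hMMx, map_zero, neg_zero]) (hpM x) hp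

end LinearMap.IsSkewAdjoint

/-- a Lie subalgebra of `End(V)` consisting of nilpotent endomorphisms that are
skew-symmetric with respect to a Lorentz form is abelian. -/
theorem stmt10 {V : Type*} [AddCommGroup V] [Module ℝ V] [FiniteDimensional ℝ V]
    (B : LinearMap.BilinForm ℝ V)
    (hsymm : ∀ X Y : V, B X Y = B Y X)
    (hLorentz : IsLorentz B)
    (𝔨 : Submodule ℝ (V →ₗ[ℝ] V))
    (hclosed : ∀ K ∈ 𝔨, ∀ L ∈ 𝔨, K ∘ₗ L - L ∘ₗ K ∈ 𝔨)
    (hnil : ∀ K ∈ 𝔨, IsNilpotent K)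
    (hskew : ∀ K ∈ 𝔨, ∀ X Y : V, B (K X) Y + B X (K Y) = 0) :
    ∀ K ∈ 𝔨, ∀ L ∈ 𝔨, K ∘ₗ L = L ∘ₗ K := by
  have hB : B.IsSymm := ⟨hsymm⟩
  have hnd := hLorentz.nondegenerate
  have hW := hLorentz.hasWittIndexLeOne hB
  have skew : ∀ K ∈ 𝔨, IsSkewAdjoint B K := fun K hK x y => by
    rw [Pi.neg_apply, map_neg, eq_neg_iff_add_eq_zero]
    exact hskew K hK x y
  have cube : ∀ K ∈ 𝔨, K ^ 3 = 0 := fun K hK => (skew K hK).pow_three_eq_zero hW (hnil K hK)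
  intro K hK L hL
  rcases eq_or_ne K 0 with rfl | hK0
  · simp
  rcases eq_or_ne L 0 with rfl | hL0
  · simp
  obtain ⟨c, p, hc, hp, hKsq, hpp, hKrange, hKorth⟩ :=
    (skew K hK).exists_null_axis hB hnd hW (cube K hK) hK0
  obtain ⟨d, q, hd, hq, hLsq, hqq, hLrange, hLorth⟩ :=
    (skew L hL).exists_null_axis hB hnd hW (cube L hL) hL0
  have hbracket : K * L - L * K ∈ 𝔨 := hclosed K hK L hL
  have htrace := LinearMap.trace_mul_self_mul_mul_self_eq_zero
    (mul_mul_add_mul_mul_add_mul_mul_eq_zero (𝕜 := ℝ) (cube L hL) (cube _ (add_mem hK hL))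
      (cube _ (sub_mem hK hL))) (hnil _ hbracket)
  rw [LinearMap.BilinForm.trace_mul_self_mul_mul_self_eq hKsq hLsq, hB.eq q p] at htrace
  have hpq : B p q = 0 := by simpa [hc, hd] using htrace
  have hline : ℝ ∙ q = ℝ ∙ p :=
    le_antisymm ((span_singleton_le_iff_mem _ _).2 (hW p q hpp hqq hpq hp))
      ((span_singleton_le_iff_mem _ _).2 (hW q p hqq hpp (by rwa [hB.eq]) hq))
  rw [hline] at hLrange hLorth
  exact sub_eq_zero.1 <| (skew _ hbracket).eq_zero_of_range_le_span hB hnd <|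
    LinearMap.range_mul_sub_mul_le hKrange hKorth hLrange hLorth
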